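/- (Theorem A, one-variable version.) Let G ⊆ ℂ be a domain, S a set, A ∈ G, and H_j : S × G → G functions holomorphic in the second variable, each mapping S × G into a fixed compact set N ⊆ G containing A in its interior, with H_j(s,·) holomorphic on G for each s. Suppose Σ_j sup_{s∈S, z∈N} |H_j(s,z) − A| < ∞. Then the nested compositions φ_m(s,z) = H_1(s, H_2(s, … H_m(s,z)…)) converge uniformly for s ∈ S and z ∈ N as m → ∞, and the limit is independent of z. -/

import Mathlib

/-!
For `m ≥ 1` the maps `φ_m(s, ·)` are holomorphic on `G` with values in the bounded set `N`,
so the Schwarz lemma on a disc `B(A, R) ⊆ G` makes them all Lipschitz at `A` with one constant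
`K` (outside the disc the bound `diam N ≤ (diam N / R) |w - A|` is trivial). Since
`φ_{m+1}(s, z) = φ_m(s, H_{m+1}(s, z))` and `|H_{m+1}(s, z) - A| ≤ ρ_{m+1}`, every
`φ_{m+1}(s, z)` lies within `K ρ_{m+1}` of `φ_m(s, A)`. Hence `φ_m(s, A)` converges uniformly
in `s` at the rate of the tails of `∑ K ρ_j`, and `φ_{m+1}(s, z)` follows it uniformly in `z ∈ N`.
-/

open Filter

/-- `nestComp H m s z = H 1 (s, H 2 (s, … H m (s, z) …))`, with `nestComp H 0 s z = z`. -/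
def nestComp {α : Type*} (H : ℕ → α → ℂ → ℂ) : ℕ → α → ℂ → ℂ
  | 0 => fun _ z => z
  | m + 1 => fun s z => nestComp H m s (H (m + 1) s z)

open Topology Metric Set

section UniformLimits

variable {β X : Type*} [PseudoMetricSpace X]

theorem exists_dist_le_tsum_of_dist_succ_le [CompleteSpace X] {u : ℕ → β → X} {d : ℕ → ℝ}
    (hd : Summable d) (hu : ∀ n x, dist (u n x) (u (n + 1) x) ≤ d n) :
    ∃ f : β → X, ∀ n x, dist (u n x) (f x) ≤ ∑' m, d (m + n) := by
  choose f hf using fun x ↦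
    cauchySeq_tendsto_of_complete (cauchySeq_of_dist_le_of_summable d (hu · x) hd)
  refine ⟨f, fun n x ↦ ?_⟩
  simpa only [add_comm n] using dist_le_tsum_of_dist_le_of_tendsto d (hu · x) hd (hf x) n

theorem tendstoUniformlyOn_of_dist_succ_le {F : ℕ → β → X} {f : β → X} {s : Set β}
    {e : ℕ → ℝ} (he : Tendsto e atTop (𝓝 0)) (h : ∀ n, ∀ x ∈ s, dist (F (n + 1) x) (f x) ≤ e n) :
    TendstoUniformlyOn F f atTop s := by
  rw [Metric.tendstoUniformlyOn_iff]
  intro ε hε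
  rw [← map_add_atTop_eq_nat 1, eventually_map]
  filter_upwards [he.eventually (gt_mem_nhds hε)] with n hn x hx
  exact (dist_comm (f x) _ ▸ h n x hx).trans_lt hn

end UniformLimits

theorem dist_le_div_mul_dist_of_mapsTo {E F : Type*} [NormedAddCommGroup E] [NormedSpace ℂ E]
    [NormedAddCommGroup F] [NormedSpace ℂ F] {f : E → F} {U : Set E} {c z : E} {R₁ R₂ : ℝ}
    (hR₁ : 0 < R₁) (hU : ball c R₁ ⊆ U) (hd : DifferentiableOn ℂ f U)
    (h_maps : MapsTo f U (closedBall (f c) R₂)) (hz : z ∈ U) :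
    dist (f z) (f c) ≤ R₂ / R₁ * dist z c := by
  by_cases hzc : z ∈ ball c R₁
  · exact Complex.dist_le_div_mul_dist_of_mapsTo_ball (hd.mono hU) (h_maps.mono_left hU) hzc
  · have hfz : dist (f z) (f c) ≤ R₂ := h_maps hz
    have hR₂ : 0 ≤ R₂ := dist_nonneg.trans hfz
    calc dist (f z) (f c) ≤ R₂ / R₁ * R₁ := by rwa [div_mul_cancel₀ _ hR₁.ne']
      _ ≤ R₂ / R₁ * dist z c := by gcongr; simpa using hzc

section nestComp

variable {α : Type*} {G N : Set ℂ} {H : ℕ → α → ℂ → ℂ}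

theorem mapsTo_nestComp_succ (hNG : N ⊆ G) (hmaps : ∀ j s, MapsTo (H j s) G N) (s : α) :
    ∀ k, MapsTo (nestComp H (k + 1) s) G N
  | 0 => hmaps 1 s
  | k + 1 => (mapsTo_nestComp_succ hNG hmaps s k).comp ((hmaps (k + 2) s).mono_right hNG)

theorem differentiableOn_nestComp (hmaps : ∀ j s, MapsTo (H j s) G G)
    (hhol : ∀ j s, DifferentiableOn ℂ (H j s) G) (s : α) :
    ∀ k, DifferentiableOn ℂ (nestComp H k s) G
  | 0 => differentiableOn_id
  | k + 1 => (differentiableOn_nestComp hmaps hhol s k).comp (hhol (k + 1) s) (hmaps (k + 1) s)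

theorem exists_dist_nestComp_le {A : ℂ} (hG : IsOpen G) (hAG : A ∈ G)
    (hN : Bornology.IsBounded N) (hNG : N ⊆ G) (hmaps : ∀ j s, MapsTo (H j s) G N)
    (hhol : ∀ j s, DifferentiableOn ℂ (H j s) G) :
    ∃ K, 0 ≤ K ∧ ∀ k s, ∀ w ∈ G,
      dist (nestComp H k s w) (nestComp H k s A) ≤ K * dist w A := by
  obtain ⟨R, hR, hRG⟩ := Metric.isOpen_iff.1 hG A hAG
  refine ⟨max 1 (diam N / R), zero_le_one.trans (le_max_left _ _), ?_⟩
  rintro (_ | k) s w hw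
  · exact le_mul_of_one_le_left dist_nonneg (le_max_left _ _)
  · have hφ := mapsTo_nestComp_succ hNG hmaps s k
    have hball :
        MapsTo (nestComp H (k + 1) s) G (closedBall (nestComp H (k + 1) s A) (diam N)) :=
      fun z hz ↦ dist_le_diam_of_mem hN (hφ hz) (hφ hAG)
    refine (dist_le_div_mul_dist_of_mapsTo hR hRG ?_ hball hw).trans ?_
    · exact differentiableOn_nestComp (fun j s ↦ (hmaps j s).mono_right hNG) hhol s (k + 1)
    · exact mul_le_mul_of_nonneg_right (le_max_right _ _) dist_nonneg

end nestComp

theorem theoremA_general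
    {α : Type*} (G N : Set ℂ) (hG : IsOpen G)
    (hN : IsCompact N) (hNG : N ⊆ G) (A : ℂ) (hA : A ∈ interior N)
    (H : ℕ → α → ℂ → ℂ)
    (hmaps : ∀ j, ∀ s : α, ∀ z ∈ G, H j s z ∈ N)
    (hhol : ∀ j, ∀ s : α, DifferentiableOn ℂ (H j s) G)
    (ρ : ℕ → ℝ) (hρ : Summable ρ)
    (hb : ∀ j, ∀ s : α, ∀ z ∈ N, ‖H j s z - A‖ ≤ ρ j) :
    ∃ f : α → ℂ,
      TendstoUniformlyOn (fun m (p : α × ℂ) => nestComp H m p.1 p.2)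
        (fun p => f p.1) atTop ((Set.univ : Set α) ×ˢ N) := by
  have hAN : A ∈ N := interior_subset hA
  obtain ⟨K, hK, hφ⟩ := exists_dist_nestComp_le hG (hNG hAN) hN.isBounded hNG hmaps hhol
  have step : ∀ k s, ∀ z ∈ N, dist (nestComp H (k + 1) s z) (nestComp H k s A) ≤ K * ρ (k + 1) := by
    intro k s z hz
    calc dist (nestComp H (k + 1) s z) (nestComp H k s A)
        = dist (nestComp H k s (H (k + 1) s z)) (nestComp H k s A) := rfl
      _ ≤ K * dist (H (k + 1) s z) A := hφ k s _ (hNG (hmaps _ s z (hNG hz)))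
      _ ≤ K * ρ (k + 1) := by gcongr; rw [dist_eq_norm]; exact hb _ s z hz
  have hd : Summable fun k ↦ K * ρ (k + 1) := ((summable_nat_add_iff 1).2 hρ).mul_left K
  obtain ⟨f, hf⟩ := exists_dist_le_tsum_of_dist_succ_le hd
    (u := fun k s ↦ nestComp H k s A) fun k s ↦ dist_comm (nestComp H k s A) _ ▸ step k s A hAN
  refine ⟨f, tendstoUniformlyOn_of_dist_succ_le
    (e := fun k ↦ K * ρ (k + 1) + ∑' m, K * ρ (m + k + 1)) ?_
    fun k p hp ↦ (dist_triangle _ _ _).trans (add_le_add (step k p.1 p.2 hp.2) (hf k p.1))⟩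
  simpa using hd.tendsto_atTop_zero.add (tendsto_sum_nat_add fun m ↦ K * ρ (m + 1))

/-- Theorem A, one-variable version: convergence of infinite compositions. -/
theorem theoremA
    {α : Type*} (G N : Set ℂ) (hG : IsOpen G) (hGc : IsConnected G)
    (hN : IsCompact N) (hNG : N ⊆ G) (A : ℂ) (hA : A ∈ interior N)
    (H : ℕ → α → ℂ → ℂ)
    (hmaps : ∀ j, ∀ s : α, ∀ z ∈ G, H j s z ∈ N)
    (hhol : ∀ j, ∀ s : α, DifferentiableOn ℂ (H j s) G)
    (ρ : ℕ → ℝ) (hρ : Summable ρ)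
    (hb : ∀ j, ∀ s : α, ∀ z ∈ N, ‖H j s z - A‖ ≤ ρ j) :
    ∃ f : α → ℂ,
      TendstoUniformlyOn (fun m (p : α × ℂ) => nestComp H m p.1 p.2)
        (fun p => f p.1) atTop ((Set.univ : Set α) ×ˢ N) :=
  theoremA_general G N hG hN hNG A hA H hmaps hhol ρ hρ hb
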